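/- arXiv:0903.4634 — 3 statements merged into one kernel-verified Lean document; each statement's English description precedes it below -/
import Mathlib

section
/- Let s, t ≥ 1 be natural numbers and let w, w' ∈ Row(s,t) be two vectors each having at least one nonzero entry. Then w and w' are cyclic permutations of each other if and only if their pair sequences pairs(w) and pairs(w') are cyclic permutations of each other (as finite sequences of pairs of positive integers). -/
/-!
Rotating `x :: l` to `l ++ [x]` either shifts every nonzero position down by one (when `x = 0`)
or moves the first pair of the pair sequence to its end (when `x ≠ 0`), so rotated vectors have
rotated pair sequences. Conversely, a vector starting with a nonzero entry is the concatenation of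
the blocks `a, 0, …, 0` of length `d` over its pairs `(a, d)`, hence is recovered from its pair
sequence, and this concatenation commutes with rotation. A vector with a nonzero entry is a
rotation of one starting with a nonzero entry.
-/

/-- The list of positions of the nonzero entries of `w`. -/
def nzPos (w : List ℕ) : List ℕ :=
  (List.range w.length).filter (fun i => w.getD i 0 ≠ 0)

/-- The pair sequence of `w`: each nonzero entry of `w` together with the cyclic
distance from its position to the next nonzero position. -/
def pairsOf (w : List ℕ) : List (ℕ × ℕ) :=
  (List.range (nzPos w).length).map (fun j =>
    (w.getD ((nzPos w).getD j 0) 0,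
     if j + 1 = (nzPos w).length then (nzPos w).getD 0 0 + w.length - (nzPos w).getD j 0
     else (nzPos w).getD (j + 1) 0 - (nzPos w).getD j 0))

theorem List.IsRotated.flatten {α : Type*} {L L' : List (List α)} (h : L ~r L') :
    L.flatten ~r L'.flatten := by
  obtain ⟨n, rfl⟩ := h
  conv_lhs => rw [← L.take_append_drop (n % L.length)]
  rw [L.rotate_eq_drop_append_take_mod, List.flatten_append, List.flatten_append]
  exact List.isRotated_append

theorem List.IsRotated.flatMap {α β : Type*} {l l' : List α} (h : l ~r l') (f : α → List β) :
    l.flatMap f ~r l'.flatMap f := by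
  simpa only [List.flatMap_def] using (h.map f).flatten

theorem lt_length_of_mem_nzPos {w : List ℕ} {i : ℕ} (h : i ∈ nzPos w) : i < w.length := by
  simpa [nzPos] using (List.mem_filter.mp h).1

theorem nzPos_append (u v : List ℕ) :
    nzPos (u ++ v) = nzPos u ++ (nzPos v).map (· + u.length) := by
  simp only [nzPos, List.length_append, List.range_add, List.filter_append, List.filter_map]
  congr 1
  · refine List.filter_congr fun i hi => ?_
    rw [List.getD_append _ _ _ _ (List.mem_range.mp hi)]
  · simp only [add_comm _ u.length]
    congr 1
    refine List.filter_congr fun i _ => ?_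
    simp only [Function.comp_apply]
    rw [List.getD_append_right _ _ _ _ (by omega), Nat.add_sub_cancel_left]

theorem nzPos_singleton_zero : nzPos [0] = [] := rfl

theorem nzPos_singleton {x : ℕ} (hx : x ≠ 0) : nzPos [x] = [0] := by
  simp [nzPos, hx]

def gapPairs (g : ℕ → ℕ) (e : ℕ) (P : List ℕ) : List (ℕ × ℕ) :=
  P.zipWith (fun i j => (g i, j - i)) (P.tail ++ [e])

def cyclicPairs (g : ℕ → ℕ) (s : ℕ) : List ℕ → List (ℕ × ℕ)
  | [] => []
  | p :: P => gapPairs g (p + s) (p :: P)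

section Gaps

variable (g : ℕ → ℕ)

theorem gapPairs_cons (e p : ℕ) (P : List ℕ) :
    gapPairs g e (p :: P) = (g p, P.headD e - p) :: gapPairs g e P := by
  cases P <;> rfl

theorem gapPairs_append_singleton (e q : ℕ) (P : List ℕ) :
    gapPairs g e (P ++ [q]) = gapPairs g q P ++ [(g q, e - q)] := by
  cases P with
  | nil => rfl
  | cons p P =>
    simp only [gapPairs, List.cons_append, List.tail_cons]
    rw [← List.cons_append, List.zipWith_append (by simp)]
    rfl

theorem gapPairs_map_add (e c : ℕ) (P : List ℕ) :
    gapPairs g (e + c) (P.map (· + c)) = gapPairs (fun i => g (i + c)) e P := by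
  rw [gapPairs, ← List.map_tail, ← List.map_singleton (f := (· + c)), ← List.map_append,
    List.zipWith_map]
  simp only [Nat.add_sub_add_right]
  rfl

theorem cyclicPairs_map_add (s c : ℕ) (P : List ℕ) :
    cyclicPairs g s (P.map (· + c)) = cyclicPairs (fun i => g (i + c)) s P := by
  cases P with
  | nil => rfl
  | cons p P =>
    simpa [cyclicPairs, add_right_comm p c s] using gapPairs_map_add g (p + s) c (p :: P)

theorem cyclicPairs_append_singleton {s p : ℕ} (hg : g (p + s) = g p) (P : List ℕ) :
    cyclicPairs g s (P ++ [p + s]) = (cyclicPairs g s (p :: P)).rotate 1 := by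
  rw [cyclicPairs, gapPairs_cons, List.rotate_cons_succ, List.rotate_zero]
  cases P with
  | nil => simp [cyclicPairs, gapPairs, hg]
  | cons q P =>
    rw [List.cons_append, cyclicPairs, ← List.cons_append, gapPairs_append_singleton, hg,
      Nat.add_sub_add_right]
    rfl

end Gaps

theorem map_range_eq_gapPairs {f g : ℕ → ℕ} {e : ℕ} {P : List ℕ} (hfg : ∀ i ∈ P, f i = g i) :
    (List.range P.length).map (fun j => (f (P.getD j 0),
      if j + 1 = P.length then e - P.getD j 0 else P.getD (j + 1) 0 - P.getD j 0)) =
    gapPairs g e P := by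
  refine List.ext_getElem (by simp [gapPairs]; omega) fun j h₁ _ => ?_
  simp only [List.length_map, List.length_range] at h₁
  simp only [gapPairs, List.getElem_map, List.getElem_range, List.getElem_zipWith,
    List.getD_eq_getElem _ _ h₁, hfg _ (List.getElem_mem h₁)]
  split_ifs with hj
  · simp [List.getElem_append_right, hj]
  · rw [List.getElem_append_left (by simp; omega)]
    rw [List.getD_eq_getElem _ _ (by omega)]
    simp

theorem pairsOf_eq_cyclicPairs {w : List ℕ} {g : ℕ → ℕ} (hg : ∀ i < w.length, g i = w.getD i 0) :
    pairsOf w = cyclicPairs g w.length (nzPos w) := by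
  rw [pairsOf, map_range_eq_gapPairs (g := g) fun i hi => (hg i (lt_length_of_mem_nzPos hi)).symm]
  cases nzPos w <;> rfl

theorem pairsOf_isRotated_rotate_one (w : List ℕ) : pairsOf w ~r pairsOf (w.rotate 1) := by
  cases w with
  | nil => rfl
  | cons x l =>
    -- both `x :: l` and (after a shift by one) `l ++ [x]` are read off `x :: l ++ [x]`
    set h : ℕ → ℕ := fun i => (x :: l ++ [x]).getD i 0
    have hcons : pairsOf (x :: l) = cyclicPairs h (l.length + 1) (nzPos ([x] ++ l)) :=
      pairsOf_eq_cyclicPairs fun i hi => List.getD_append _ _ _ _ hi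
    have hsnoc : pairsOf (l ++ [x]) =
        cyclicPairs h (l.length + 1) ((nzPos (l ++ [x])).map (· + 1)) := by
      have hlen : (l ++ [x]).length = l.length + 1 := by simp
      rw [cyclicPairs_map_add, ← hlen]
      exact pairsOf_eq_cyclicPairs fun i _ => rfl
    rw [List.rotate_cons_succ, List.rotate_zero, hcons, hsnoc, nzPos_append, nzPos_append]
    rcases eq_or_ne x 0 with rfl | hx
    · simp only [nzPos_singleton_zero, List.nil_append, List.map_nil, List.append_nil,
        List.length_singleton]
      exact .refl _
    · have hrot := cyclicPairs_append_singleton h (s := l.length + 1) (p := 0) (by simp [h])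
        ((nzPos l).map (· + 1))
      rw [zero_add] at hrot
      simp only [nzPos_singleton hx, List.map_cons, List.map_nil, List.singleton_append,
        List.map_append, List.length_singleton, zero_add, hrot]
      exact ⟨1, rfl⟩

theorem pairsOf_isRotated {w w' : List ℕ} (h : w ~r w') : pairsOf w ~r pairsOf w' := by
  obtain ⟨k, rfl⟩ := h
  induction k with
  | zero => rw [List.rotate_zero]
  | succ k ih =>
    rw [← List.rotate_rotate]
    exact ih.trans (pairsOf_isRotated_rotate_one (w.rotate k))

def ofPairs (ps : List (ℕ × ℕ)) : List ℕ :=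
  ps.flatMap fun p => p.1 :: List.replicate (p.2 - 1) 0

theorem ofPairs_gapPairs_nzPos_cons {x : ℕ} (hx : x ≠ 0) (l : List ℕ) {g : ℕ → ℕ}
    (hg : ∀ i ≤ l.length, g i = (x :: l).getD i 0) {e : ℕ} (he : l.length < e) :
    ofPairs (gapPairs g e (nzPos (x :: l))) = x :: l ++ List.replicate (e - l.length - 1) 0 := by
  induction l using List.reverseRecOn generalizing e with
  | nil =>
    rw [← List.singleton_append (l := []), List.append_nil, nzPos_singleton hx]
    simp [ofPairs, gapPairs, hg 0 le_rfl]
  | append_singleton l y ih =>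
    have hg' : ∀ i ≤ l.length, g i = (x :: l).getD i 0 := fun i hi => by
      rw [hg i (by simp; omega), ← List.cons_append, List.getD_append _ _ _ _ (by simp; omega)]
    rw [← List.cons_append, nzPos_append]
    rcases eq_or_ne y 0 with rfl | hy
    · simp only [List.length_append, List.length_singleton] at he ⊢
      rw [nzPos_singleton_zero, List.map_nil, List.append_nil, ih hg' (by omega),
        show e - l.length - 1 = e - (l.length + 1) - 1 + 1 by omega, List.replicate_succ]
      simp
    · rw [nzPos_singleton hy, List.map_singleton, gapPairs_append_singleton, ofPairs,
        List.flatMap_append, ← ofPairs, ih hg' (by simp)]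
      simp [hg (l.length + 1) (by simp)]

theorem ofPairs_pairsOf {x : ℕ} (hx : x ≠ 0) (l : List ℕ) :
    ofPairs (pairsOf (x :: l)) = x :: l := by
  have hpos : nzPos (x :: l) = 0 :: (nzPos l).map (· + 1) := by
    rw [← List.singleton_append, nzPos_append, nzPos_singleton hx]
    rfl
  rw [pairsOf_eq_cyclicPairs (g := ((x :: l).getD · 0)) fun _ _ => rfl, hpos, cyclicPairs, ← hpos,
    zero_add, ofPairs_gapPairs_nzPos_cons hx l (fun _ _ => rfl) (by simp)]
  simp

theorem List.IsRotated.ofPairs {ps ps' : List (ℕ × ℕ)} (h : ps ~r ps') :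
    ofPairs ps ~r ofPairs ps' :=
  h.flatMap _

theorem exists_cons_isRotated {w : List ℕ} (h : ∃ x ∈ w, x ≠ 0) :
    ∃ x l, x ≠ 0 ∧ x :: l ~r w := by
  obtain ⟨x, hxw, hx⟩ := h
  obtain ⟨a, b, rfl⟩ := List.append_of_mem hxw
  exact ⟨x, b ++ a, hx, by simpa using (List.isRotated_append (l := a) (l' := x :: b)).symm⟩

theorem pairs_isRotated_iff_general (w w' : List ℕ) (hnz : ∃ x ∈ w, x ≠ 0) (hnz' : ∃ x ∈ w', x ≠ 0) :
    w ~r w' ↔ pairsOf w ~r pairsOf w' := by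
  refine ⟨pairsOf_isRotated, fun h => ?_⟩
  obtain ⟨x, l, hx, hw⟩ := exists_cons_isRotated hnz
  obtain ⟨x', l', hx', hw'⟩ := exists_cons_isRotated hnz'
  have hpairs : pairsOf (x :: l) ~r pairsOf (x' :: l') :=
    (pairsOf_isRotated hw).trans (h.trans (pairsOf_isRotated hw'.symm))
  have hcons : x :: l ~r x' :: l' := by
    simpa only [ofPairs_pairsOf hx, ofPairs_pairsOf hx'] using hpairs.ofPairs
  exact hw.symm.trans (hcons.trans hw')

/-- Two vectors in `Row(s,t)` with at least one nonzero entry are cyclic permutations of each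
other iff their pair sequences are cyclic permutations of each other. -/
theorem pairs_isRotated_iff (s t : ℕ) (hs : 1 ≤ s) (ht : 1 ≤ t)
    (w w' : List ℕ) (hw : w.length = s) (hw' : w'.length = s)
    (hsum : w.sum = t) (hsum' : w'.sum = t)
    (hnz : ∃ x ∈ w, x ≠ 0) (hnz' : ∃ x ∈ w', x ≠ 0) :
    w ~r w' ↔ pairsOf w ~r pairsOf w' :=
  pairs_isRotated_iff_general w w' hnz hnz'
end

section
/- Let s, t ≥ 1 be natural numbers and let w ∈ Row(s,t) have pair sequence pairs(w) = ((a_0,b_0),(a_1,b_1),...,(a_k,b_k)). Then there exists a vector v ∈ Row(t,s), unique up to cyclic permutation, whose pair sequence is a cyclic permutation of ((b_0,a_1),(b_1,a_2),...,(b_{k-1},a_k),(b_k,a_0)). Moreover, the cyclic equivalence class ⟨v⟩ depends only on the cyclic equivalence class ⟨w⟩, so that the complement ⟨w⟩^c := ⟨v⟩ is a well-defined class in Row(t,s). -/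
/-- The complemented pair sequence: `((a₀,b₀),...,(a_k,b_k)) ↦ ((b₀,a₁),(b₁,a₂),...,(b_k,a₀))`. -/
def complPairs (p : List (ℕ × ℕ)) : List (ℕ × ℕ) :=
  (p.map Prod.snd).zip ((p.map Prod.fst).rotate 1)

/-- `v` is a complement of `w`: `v ∈ Row(t,s)` (where `w ∈ Row(s,t)`) and the pair sequence
of `v` is a cyclic permutation of the complemented pair sequence of `w`. -/
def IsComplementOf (w v : List ℕ) : Prop :=
  v.length = w.sum ∧ v.sum = w.length ∧ pairsOf v ~r complPairs (pairsOf w)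

theorem List.zip_rotate {α β : Type*} {l : List α} {l' : List β} (h : l.length = l'.length)
    (n : ℕ) :
    (l.rotate n).zip (l'.rotate n) = (l.zip l').rotate n := by
  apply List.ext_getElem <;> simp [h, List.getElem_rotate]

def PosPairs (p : List (ℕ × ℕ)) : Prop := ∀ x ∈ p, 0 < x.1 ∧ 0 < x.2

theorem PosPairs.cons {c d : ℕ} {p : List (ℕ × ℕ)} (hc : 0 < c) (hd : 0 < d) (hp : PosPairs p) :
    PosPairs ((c, d) :: p) :=
  List.forall_mem_cons.mpr ⟨⟨hc, hd⟩, hp⟩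

def fromPairs (p : List (ℕ × ℕ)) : List ℕ :=
  p.flatMap fun cd => cd.1 :: List.replicate (cd.2 - 1) 0

@[simp]
theorem fromPairs_nil : fromPairs [] = [] := rfl

@[simp]
theorem fromPairs_cons (c d : ℕ) (p : List (ℕ × ℕ)) :
    fromPairs ((c, d) :: p) = c :: (List.replicate (d - 1) 0 ++ fromPairs p) := by
  simp [fromPairs]

theorem length_fromPairs {p : List (ℕ × ℕ)} (hp : ∀ x ∈ p, 0 < x.2) :
    (fromPairs p).length = (p.map Prod.snd).sum := by
  induction p with
  | nil => rfl
  | cons x p ih =>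
    obtain ⟨c, d⟩ := x
    have hd : 0 < d := hp _ List.mem_cons_self
    simp [ih fun y hy => hp y (List.mem_cons_of_mem _ hy)]
    omega

theorem sum_fromPairs (p : List (ℕ × ℕ)) : (fromPairs p).sum = (p.map Prod.fst).sum := by
  induction p with
  | nil => rfl
  | cons x p ih =>
    obtain ⟨c, d⟩ := x
    simp [ih]

theorem fromPairs_isRotated {p q : List (ℕ × ℕ)} (h : p ~r q) : fromPairs p ~r fromPairs q :=
  h.flatMap _

theorem exists_eq_replicate_append_fromPairs (u : List ℕ) :
    ∃ m p, PosPairs p ∧ u = List.replicate m 0 ++ fromPairs p := by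
  induction u with
  | nil => exact ⟨0, [], by simp [PosPairs], rfl⟩
  | cons x u ih =>
    obtain ⟨m, p, hp, rfl⟩ := ih
    rcases Nat.eq_zero_or_pos x with rfl | hx
    · exact ⟨m + 1, p, hp, rfl⟩
    · exact ⟨0, (x, m + 1) :: p, hp.cons hx m.succ_pos, by simp⟩

theorem nzPos_cons (x : ℕ) (u : List ℕ) :
    nzPos (x :: u) = (if x = 0 then [] else [0]) ++ (nzPos u).map (· + 1) := by
  simp only [nzPos, List.length_cons, List.range_succ_eq_map, List.filter_cons, List.filter_map]
  split_ifs <;> simp_all [Function.comp_def]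

theorem nzPos_append_zero (u : List ℕ) : nzPos (u ++ [0]) = nzPos u := by
  simp only [nzPos, List.length_append, List.length_singleton, List.range_succ, List.filter_append]
  rw [List.filter_congr (fun i hi => by rw [List.getD_append u [0] 0 i (List.mem_range.mp hi)])]
  simp

theorem nzPos_replicate_append (m : ℕ) (u : List ℕ) :
    nzPos (List.replicate m 0 ++ u) = (nzPos u).map (· + m) := by
  induction m with
  | zero => simp
  | succ m ih =>
    rw [List.replicate_succ, List.cons_append, nzPos_cons, ih]
    simp [List.map_map, Function.comp_def, Nat.add_assoc]

theorem nzPos_cons_replicate_append {a : ℕ} (ha : a ≠ 0) (m : ℕ) (v : List ℕ) :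
    nzPos (a :: (List.replicate m 0 ++ v)) = 0 :: (nzPos v).map (· + (m + 1)) := by
  simp [nzPos_cons, ha, nzPos_replicate_append, List.map_map, Function.comp_def, Nat.add_assoc]

theorem pairsOf_zero_cons (u : List ℕ) : pairsOf (0 :: u) = pairsOf (u ++ [0]) := by
  have hN : nzPos (0 :: u) = (nzPos u).map (· + 1) := by simp [nzPos_cons]
  unfold pairsOf
  rw [hN, nzPos_append_zero, List.length_map]
  refine List.map_congr_left fun j hj => ?_
  have hj : j < (nzPos u).length := List.mem_range.mp hj
  have h0 : 0 < (nzPos u).length := by omega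
  simp only [List.getD_eq_getElem?_getD, List.getElem?_map, List.getElem?_eq_getElem hj,
    List.getElem?_eq_getElem h0, Option.map_some, Option.getD_some, List.getElem?_cons_succ]
  grind

theorem pairsOf_replicate_append (m : ℕ) (u : List ℕ) :
    pairsOf (List.replicate m 0 ++ u) = pairsOf (u ++ List.replicate m 0) := by
  induction m generalizing u with
  | zero => simp
  | succ m ih =>
    rw [List.replicate_succ, List.cons_append, pairsOf_zero_cons, List.append_assoc, ih,
      List.append_assoc]
    rfl

theorem pairsOf_cons_replicate {a : ℕ} (ha : a ≠ 0) (m : ℕ) :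
    pairsOf (a :: List.replicate m 0) = [(a, m + 1)] := by
  have h := nzPos_cons_replicate_append ha m []
  simp only [List.append_nil, show nzPos [] = [] from rfl, List.map_nil] at h
  simp [pairsOf, h]

theorem pairsOf_cons_replicate_append {a b : ℕ} (ha : a ≠ 0) (hb : b ≠ 0) (m : ℕ) (u : List ℕ) :
    pairsOf (a :: (List.replicate m 0 ++ b :: u)) = (a, m + 1) :: pairsOf (b :: u) := by
  set N := nzPos (b :: u) with hN
  have hN0 : N = 0 :: (nzPos u).map (· + 1) := by simp [hN, nzPos_cons, hb]
  unfold pairsOf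
  rw [nzPos_cons_replicate_append ha, ← hN, List.length_cons, List.length_map,
    List.range_succ_eq_map, List.map_cons, List.map_map]
  congr 1
  · simp [hN0]
  · refine List.map_congr_left fun j hj => ?_
    have hj : j < N.length := List.mem_range.mp hj
    have h0 : 0 < N.length := by simp [hN0]
    -- `b ≠ 0` puts position `0` first in `N`, so the wrap-around gap of the last pair survives
    -- the shift by `m + 1`
    have hlt : N[j] < (b :: u).length := lt_length_of_mem_nzPos (List.getElem_mem hj)
    simp only [Function.comp_apply, Nat.succ_eq_add_one, List.getD_eq_getElem?_getD,
      List.getElem?_cons_succ, List.getElem?_cons_zero, List.getElem?_map,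
      List.getElem?_eq_getElem hj, List.getElem?_eq_getElem h0, Option.map_some, Option.getD_some]
    grind

theorem pairsOf_fromPairs {p : List (ℕ × ℕ)} (hp : PosPairs p) (hne : p ≠ []) :
    pairsOf (fromPairs p) = p := by
  induction p with
  | nil => exact absurd rfl hne
  | cons x q ih =>
    obtain ⟨c, d⟩ := x
    obtain ⟨⟨hc, hd⟩, hq⟩ := List.forall_mem_cons.mp hp
    have hd : d - 1 + 1 = d := Nat.sub_add_cancel hd
    rcases q with _ | ⟨⟨c', d'⟩, r⟩
    · rw [fromPairs_cons, fromPairs_nil, List.append_nil, pairsOf_cons_replicate hc.ne', hd]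
    · rw [fromPairs_cons, fromPairs_cons,
        pairsOf_cons_replicate_append hc.ne' (hq _ List.mem_cons_self).1.ne', ← fromPairs_cons,
        ih hq (List.cons_ne_nil _ _), hd]

theorem pairsOf_rotate_one (w : List ℕ) : pairsOf (w.rotate 1) ~r pairsOf w := by
  rcases w with _ | ⟨x, u⟩
  · rfl
  rw [List.rotate_cons_succ, List.rotate_zero]
  rcases Nat.eq_zero_or_pos x with rfl | hx
  · rw [pairsOf_zero_cons]
  obtain ⟨m, p, hp, rfl⟩ := exists_eq_replicate_append_fromPairs u
  have hcons : x :: (List.replicate m 0 ++ fromPairs p) = fromPairs ((x, m + 1) :: p) := by simp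
  have hsnoc : fromPairs p ++ [x] ++ List.replicate m 0 = fromPairs (p ++ [(x, m + 1)]) := by
    simp [fromPairs]
  have hp' : PosPairs (p ++ [(x, m + 1)]) := by
    simpa only [PosPairs, List.forall_mem_append, List.forall_mem_singleton] using
      ⟨hp, hx, m.succ_pos⟩
  rw [hcons, List.append_assoc, pairsOf_replicate_append, hsnoc, pairsOf_fromPairs hp' (by simp),
    pairsOf_fromPairs (hp.cons hx m.succ_pos) (List.cons_ne_nil _ _)]
  exact List.isRotated_concat _ _

theorem pairsOf_rotate (w : List ℕ) (n : ℕ) : pairsOf (w.rotate n) ~r pairsOf w := by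
  induction n with
  | zero => rw [List.rotate_zero]
  | succ n ih => rw [← List.rotate_rotate]; exact (pairsOf_rotate_one _).trans ih

theorem exists_isRotated_fromPairs {w : List ℕ} (hw : w.sum ≠ 0) :
    ∃ p, PosPairs p ∧ p ≠ [] ∧ w ~r fromPairs p := by
  obtain ⟨x, hxw, hx⟩ := List.exists_mem_ne_zero_of_sum_ne_zero hw
  obtain ⟨l₁, l₂, rfl⟩ := List.append_of_mem hxw
  obtain ⟨m, p, hp, hl⟩ := exists_eq_replicate_append_fromPairs (l₂ ++ l₁)
  refine ⟨(x, m + 1) :: p, hp.cons (Nat.pos_of_ne_zero hx) m.succ_pos, List.cons_ne_nil _ _, ?_⟩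
  rw [fromPairs_cons, Nat.add_sub_cancel, ← hl, ← List.cons_append]
  exact List.isRotated_append

theorem isRotated_fromPairs_pairsOf {w : List ℕ} (hw : w.sum ≠ 0) :
    w ~r fromPairs (pairsOf w) := by
  obtain ⟨p, hp, hne, hwp⟩ := exists_isRotated_fromPairs hw
  have h := fromPairs_isRotated (pairsOf_isRotated hwp)
  rw [pairsOf_fromPairs hp hne] at h
  exact hwp.trans h.symm

theorem isRotated_of_pairsOf_isRotated {v v' : List ℕ} (hv : v.sum ≠ 0) (hv' : v'.sum ≠ 0)
    (h : pairsOf v ~r pairsOf v') : v ~r v' :=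
  (isRotated_fromPairs_pairsOf hv).trans
    ((fromPairs_isRotated h).trans (isRotated_fromPairs_pairsOf hv').symm)

theorem complPairs_rotate (p : List (ℕ × ℕ)) (n : ℕ) :
    complPairs (p.rotate n) = (complPairs p).rotate n := by
  rw [complPairs, complPairs, List.map_rotate, List.map_rotate, List.rotate_rotate, Nat.add_comm,
    ← List.rotate_rotate, List.zip_rotate (by simp)]

theorem complPairs_isRotated {p q : List (ℕ × ℕ)} (h : p ~r q) : complPairs p ~r complPairs q := by
  obtain ⟨n, rfl⟩ := h
  exact ⟨n, (complPairs_rotate p n).symm⟩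

theorem map_fst_complPairs (p : List (ℕ × ℕ)) : (complPairs p).map Prod.fst = p.map Prod.snd :=
  List.map_fst_zip (by simp)

theorem map_snd_complPairs (p : List (ℕ × ℕ)) :
    (complPairs p).map Prod.snd = (p.map Prod.fst).rotate 1 :=
  List.map_snd_zip (by simp)

theorem posPairs_complPairs {p : List (ℕ × ℕ)} (hp : PosPairs p) : PosPairs (complPairs p) := by
  rintro ⟨b, a⟩ hx
  obtain ⟨hb, ha⟩ := List.of_mem_zip hx
  obtain ⟨y, hy, rfl⟩ := List.mem_map.mp hb
  obtain ⟨z, hz, rfl⟩ := List.mem_map.mp (List.mem_rotate.mp ha)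
  exact ⟨(hp y hy).2, (hp z hz).1⟩

theorem complPairs_ne_nil {p : List (ℕ × ℕ)} (hp : p ≠ []) : complPairs p ≠ [] := by
  simpa [complPairs] using hp

theorem exists_isComplementOf {w : List ℕ} (hw : w.sum ≠ 0) : ∃ v, IsComplementOf w v := by
  obtain ⟨p, hp, hne, hwp⟩ := exists_isRotated_fromPairs hw
  have hC := posPairs_complPairs hp
  refine ⟨fromPairs (complPairs p), ?_, ?_, ?_⟩
  · rw [length_fromPairs fun x hx => (hC x hx).2, map_snd_complPairs,
      (List.rotate_perm _ _).sum_eq, ← sum_fromPairs, hwp.perm.sum_eq]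
  · rw [sum_fromPairs, map_fst_complPairs, ← length_fromPairs fun x hx => (hp x hx).2,
      hwp.perm.length_eq]
  · rw [pairsOf_fromPairs hC (complPairs_ne_nil hne)]
    apply complPairs_isRotated
    simpa only [pairsOf_fromPairs hp hne] using (pairsOf_isRotated hwp).symm

theorem IsComplementOf.isRotated {w w' v v' : List ℕ} (hw : w.length ≠ 0) (h : w ~r w')
    (hv : IsComplementOf w v) (hv' : IsComplementOf w' v') : v ~r v' := by
  obtain ⟨-, hvs, hvp⟩ := hv
  obtain ⟨-, hvs', hvp'⟩ := hv'
  refine isRotated_of_pairsOf_isRotated (hvs ▸ hw) (hvs' ▸ h.perm.length_eq ▸ hw) ?_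
  exact hvp.trans ((complPairs_isRotated (pairsOf_isRotated h)).trans hvp'.symm)

/-- For `w ∈ Row(s,t)` there exists a vector `v ∈ Row(t,s)`, unique up to cyclic permutation,
whose pair sequence is a cyclic permutation of the complemented pair sequence of `w`; moreover
its cyclic class depends only on the cyclic class of `w`, so the complement `⟨w⟩ᶜ := ⟨v⟩`
is a well-defined class in `Row(t,s)`. -/
theorem complement_exists_unique_welldefined (s t : ℕ) (hs : 1 ≤ s) (ht : 1 ≤ t)
    (w : List ℕ) (hlen : w.length = s) (hsum : w.sum = t) :
    (∃ v : List ℕ, IsComplementOf w v) ∧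
    (∀ v v' : List ℕ, IsComplementOf w v → IsComplementOf w v' → v ~r v') ∧
    (∀ w' v v' : List ℕ, w ~r w' → IsComplementOf w v → IsComplementOf w' v' → v ~r v') := by
  have hw : w.length ≠ 0 := by omega
  exact ⟨exists_isComplementOf (by omega),
    fun _ _ => IsComplementOf.isRotated hw (List.IsRotated.refl w),
    fun _ _ _ => IsComplementOf.isRotated hw⟩
end

section
/- Let f, m ≥ 1 be natural numbers and let w = (w_1,...,w_f) ∈ Row(f,m). For each j with 1 ≤ j ≤ m, let a_j := k − 1, where k is the unique index with w_1 + ... + w_{k−1} < j ≤ w_1 + ... + w_k. Then the vector μ := (f − a_m + a_1, a_2 − a_1, a_3 − a_2, ..., a_m − a_{m−1}) has all entries nonnegative, lies in Row(m,f), and satisfies ⟨μ⟩ = ⟨w⟩^c. -/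
/-- For `1 ≤ j`, `aFn w j = k - 1` where `k` is the unique index with
`w₁ + ⋯ + w_{k-1} < j ≤ w₁ + ⋯ + w_k`; it is computed as the number of partial sums
`w₁ + ⋯ + w_{i+1}` (for `0 ≤ i < f`) that are `< j`. -/
def aFn (w : List ℕ) (j : ℕ) : ℕ :=
  (List.range w.length).countP (fun i => (w.take (i + 1)).sum < j)

/-!
Let `q₀ < ⋯ < q_k` be the positions of the nonzero entries of `w` and let
`s_t = w_{q₀} + ⋯ + w_{q_{t-1}}` be the start of the `t`-th block of units. Then `a_j = q_t`
exactly for `s_t < j ≤ s_{t+1}`, so `μ` vanishes off the block starts, while (indexing from `0`)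
`μ_{s₀} = f - q_k + q₀` and `μ_{s_t} = q_t - q_{t-1}`; the gap after `s_t` is `w_{q_t}`. Hence
`pairs(μ) = ((f - q_k + q₀, w_{q₀}), (q₁ - q₀, w_{q₁}), …, (q_k - q_{k-1}, w_{q_k}))`, which is the
complemented pair sequence of `w` rotated by one step.
-/

lemma List.countP_range_eq_of_iff_lt {p : ℕ → Bool} {n i : ℕ} (hin : i ≤ n)
    (hp : ∀ k < n, p k ↔ k < i) : (List.range n).countP p = i := by
  obtain ⟨d, rfl⟩ := Nat.exists_eq_add_of_le hin
  rw [List.range_add, List.countP_append, List.countP_eq_length.2, List.countP_eq_zero.2,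
    List.length_range, add_zero]
  · simp only [List.mem_map, List.mem_range]
    rintro _ ⟨k, hk, rfl⟩ hpk
    have := (hp (i + k) (by omega)).1 hpk
    omega
  · intro k hk
    exact (hp k (by simp at hk; omega)).2 (by simpa using hk)

lemma List.rotate_one_map_range {α : Type*} (g : ℕ → α) (n : ℕ) :
    ((List.range n).map g).rotate 1 = (List.range n).map fun t => g ((t + 1) % n) := by
  refine List.ext_getElem (by simp) fun i h₁ h₂ => ?_
  simp [List.getElem_rotate]

namespace MuComplement

def partialSum (w : List ℕ) (x : ℕ) : ℕ := (w.take x).sum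

lemma partialSum_zero (w : List ℕ) : partialSum w 0 = 0 := rfl

lemma partialSum_succ (w : List ℕ) (x : ℕ) :
    partialSum w (x + 1) = partialSum w x + w.getD x 0 := by
  unfold partialSum
  rcases lt_or_ge x w.length with hx | hx
  · rw [List.sum_take_succ _ _ hx, List.getD_eq_getElem _ _ hx]
  · rw [List.take_of_length_le (by omega), List.take_of_length_le hx,
      List.getD_eq_default _ _ hx, add_zero]

lemma partialSum_mono (w : List ℕ) : Monotone (partialSum w) :=
  monotone_nat_of_le_succ fun x => by rw [partialSum_succ]; omega

lemma partialSum_length (w : List ℕ) : partialSum w w.length = w.sum := by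
  rw [partialSum, List.take_length]

lemma partialSum_eq_of_getD_eq_zero {w : List ℕ} {x y : ℕ} (hxy : x ≤ y)
    (h : ∀ i, x ≤ i → i < y → w.getD i 0 = 0) : partialSum w y = partialSum w x := by
  induction y, hxy using Nat.le_induction with
  | base => rfl
  | succ y hxy ih =>
    rw [partialSum_succ, h y hxy (by omega), ih fun i hi hiy => h i hi (by omega), add_zero]

section aFn

variable {w : List ℕ}

lemma aFn_le_length (w : List ℕ) (j : ℕ) : aFn w j ≤ w.length :=
  (List.countP_le_length).trans_eq (List.length_range)

lemma aFn_mono (w : List ℕ) : Monotone (aFn w) := fun _ _ h =>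
  List.countP_mono_left fun _ _ hi => by simp only [decide_eq_true_eq] at hi ⊢; omega

lemma aFn_eq_of_partialSum {i j : ℕ} (hi : i < w.length) (hlt : partialSum w i < j)
    (hle : j ≤ partialSum w (i + 1)) : aFn w j = i :=
  List.countP_range_eq_of_iff_lt hi.le fun k _ => by
    rw [decide_eq_true_iff, ← partialSum]
    constructor
    · intro hk
      by_contra hik
      exact absurd (hle.trans (partialSum_mono w (by omega : i + 1 ≤ k + 1))) (by omega)
    · intro hk
      exact (partialSum_mono w (by omega : k + 1 ≤ i)).trans_lt hlt

lemma exists_partialSum_lt_le {j : ℕ} (hj : 0 < j) (hjw : j ≤ w.sum) :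
    ∃ i < w.length, partialSum w i < j ∧ j ≤ partialSum w (i + 1) := by
  obtain ⟨i, hi_def⟩ : ∃ i, Nat.findGreatest (fun i => partialSum w i < j) w.length = i :=
    ⟨_, rfl⟩
  have hlt : partialSum w i < j :=
    hi_def ▸ Nat.findGreatest_spec (P := fun i => partialSum w i < j) (Nat.zero_le _) hj
  have hi : i < w.length := (hi_def ▸ Nat.findGreatest_le _ : i ≤ _).lt_of_ne fun h => by
    rw [h, partialSum_length] at hlt
    omega
  refine ⟨i, hi, hlt, not_lt.1 ?_⟩
  exact Nat.findGreatest_is_greatest (P := fun i => partialSum w i < j)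
    (hi_def ▸ Nat.lt_succ_self i) hi

end aFn

def nzAt (w : List ℕ) (t : ℕ) : ℕ := (nzPos w).getD t 0

def nzGap (w : List ℕ) (t : ℕ) : ℕ :=
  if t + 1 = (nzPos w).length then nzAt w 0 + w.length - nzAt w t
  else nzAt w (t + 1) - nzAt w t

lemma pairsOf_eq (w : List ℕ) : pairsOf w =
    (List.range (nzPos w).length).map fun t => (w.getD (nzAt w t) 0, nzGap w t) :=
  rfl

section nzPos

variable {w : List ℕ}

lemma mem_nzPos {i : ℕ} : i ∈ nzPos w ↔ i < w.length ∧ w.getD i 0 ≠ 0 := by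
  simp [nzPos]

lemma pairwise_nzPos (w : List ℕ) : (nzPos w).Pairwise (· < ·) :=
  List.pairwise_lt_range.filter _

lemma nzPos_eq_of_mem_iff {l : List ℕ} (hl : l.Pairwise (· < ·))
    (h : ∀ i, i ∈ l ↔ i < w.length ∧ w.getD i 0 ≠ 0) : nzPos w = l :=
  (pairwise_nzPos w).eq_of_mem_iff hl fun i => mem_nzPos.trans (h i).symm

lemma length_nzPos_pos (hw : w.sum ≠ 0) : 0 < (nzPos w).length := by
  refine List.length_pos_iff_exists_mem.2 ?_
  by_contra! h
  refine hw ?_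
  rw [← partialSum_length, partialSum_eq_of_getD_eq_zero (Nat.zero_le _), partialSum_zero]
  intro i _ hi
  by_contra hne
  exact h i (mem_nzPos.2 ⟨hi, hne⟩)

lemma nzAt_mem {t : ℕ} (ht : t < (nzPos w).length) : nzAt w t ∈ nzPos w := by
  rw [nzAt, List.getD_eq_getElem _ _ ht]
  exact List.getElem_mem ht

lemma nzAt_lt_length {t : ℕ} (ht : t < (nzPos w).length) : nzAt w t < w.length :=
  (mem_nzPos.1 (nzAt_mem ht)).1

lemma getD_nzAt_pos {t : ℕ} (ht : t < (nzPos w).length) : 0 < w.getD (nzAt w t) 0 :=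
  Nat.pos_of_ne_zero (mem_nzPos.1 (nzAt_mem ht)).2

lemma exists_nzAt_eq {i : ℕ} (hi : i ∈ nzPos w) : ∃ t < (nzPos w).length, nzAt w t = i := by
  obtain ⟨t, ht, rfl⟩ := List.getElem_of_mem hi
  exact ⟨t, ht, List.getD_eq_getElem _ _ ht⟩

lemma nzAt_strictMonoOn : StrictMonoOn (nzAt w) (Set.Iio (nzPos w).length) := by
  intro s hs t ht hst
  simp only [nzAt, List.getD_eq_getElem _ _ hs, List.getD_eq_getElem _ _ ht]
  exact List.pairwise_iff_getElem.1 (pairwise_nzPos w) s t hs ht hst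

lemma partialSum_eq_of_forall_not_mem_nzPos {x y : ℕ} (hxy : x ≤ y)
    (h : ∀ i, x ≤ i → i < y → i ∉ nzPos w) : partialSum w y = partialSum w x :=
  partialSum_eq_of_getD_eq_zero hxy fun i hxi hiy => by
    by_contra hne
    rcases lt_or_ge i w.length with hi | hi
    · exact h i hxi hiy (mem_nzPos.2 ⟨hi, hne⟩)
    · exact hne (List.getD_eq_default _ _ hi)

end nzPos

def blockStart (w : List ℕ) (t : ℕ) : ℕ := partialSum w (nzAt w t)

section blocks

variable {w : List ℕ} {t : ℕ}

lemma nzAt_le_nzAt_iff {s t : ℕ} (hs : s < (nzPos w).length) (ht : t < (nzPos w).length) :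
    nzAt w s ≤ nzAt w t ↔ s ≤ t :=
  nzAt_strictMonoOn.le_iff_le hs ht

lemma blockStart_zero (hK : 0 < (nzPos w).length) : blockStart w 0 = 0 := by
  rw [blockStart, partialSum_eq_of_forall_not_mem_nzPos (Nat.zero_le _), partialSum_zero]
  intro i _ hi hmem
  obtain ⟨s, hs, rfl⟩ := exists_nzAt_eq hmem
  exact absurd ((nzAt_le_nzAt_iff hK hs).2 (Nat.zero_le s)) (not_le.2 hi)

lemma blockStart_succ (ht : t + 1 < (nzPos w).length) :
    blockStart w (t + 1) = blockStart w t + w.getD (nzAt w t) 0 := by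
  have hlt := nzAt_strictMonoOn (by simp; omega : t ∈ _) ht (lt_add_one t)
  rw [blockStart, blockStart, ← partialSum_succ]
  refine partialSum_eq_of_forall_not_mem_nzPos hlt fun i hi hi' hmem => ?_
  obtain ⟨s, hs, rfl⟩ := exists_nzAt_eq hmem
  have h1 := (nzAt_le_nzAt_iff hs (by omega : t < _)).not.1 (by omega)
  have h2 := (nzAt_le_nzAt_iff ht hs).not.1 (by omega)
  omega

lemma blockStart_add_getD_last (hK : 0 < (nzPos w).length) :
    blockStart w ((nzPos w).length - 1) + w.getD (nzAt w ((nzPos w).length - 1)) 0 = w.sum := by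
  have hlast : (nzPos w).length - 1 < (nzPos w).length := by omega
  rw [blockStart, ← partialSum_succ, ← partialSum_length,
    partialSum_eq_of_forall_not_mem_nzPos (nzAt_lt_length hlast)]
  intro i hi _ hmem
  obtain ⟨s, hs, rfl⟩ := exists_nzAt_eq hmem
  have := (nzAt_le_nzAt_iff hs hlast).2 (by omega)
  omega

lemma blockStart_lt_blockStart {s : ℕ} (hst : s < t) (ht : t < (nzPos w).length) :
    blockStart w s < blockStart w t := by
  have hs : s < (nzPos w).length := hst.trans ht
  calc blockStart w s < blockStart w s + w.getD (nzAt w s) 0 := by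
        have := getD_nzAt_pos hs
        omega
    _ = partialSum w (nzAt w s + 1) := (partialSum_succ _ _).symm
    _ ≤ blockStart w t := partialSum_mono w (nzAt_strictMonoOn hs ht hst)

lemma blockStart_lt_sum (ht : t < (nzPos w).length) : blockStart w t < w.sum := by
  have hlast := blockStart_add_getD_last (w := w) (by omega)
  have hpos := getD_nzAt_pos (w := w) (t := (nzPos w).length - 1) (by omega)
  rcases (Nat.le_sub_one_of_lt ht).lt_or_eq with h | h
  · have := blockStart_lt_blockStart (w := w) h (by omega)
    omega
  · rw [h]
    omega

lemma aFn_of_mem_block {j : ℕ} (ht : t < (nzPos w).length) (hlt : blockStart w t < j)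
    (hle : j ≤ blockStart w t + w.getD (nzAt w t) 0) : aFn w j = nzAt w t :=
  aFn_eq_of_partialSum (nzAt_lt_length ht) hlt (by rwa [partialSum_succ])

lemma exists_mem_block {j : ℕ} (hj : 0 < j) (hjw : j ≤ w.sum) : ∃ t < (nzPos w).length,
    blockStart w t < j ∧ j ≤ blockStart w t + w.getD (nzAt w t) 0 := by
  obtain ⟨i, hi, hlt, hle⟩ := exists_partialSum_lt_le hj hjw
  rw [partialSum_succ] at hle
  obtain ⟨t, ht, rfl⟩ := exists_nzAt_eq (mem_nzPos.2 ⟨hi, by omega⟩)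
  exact ⟨t, ht, hlt, hle⟩

lemma aFn_blockStart_add_one (ht : t < (nzPos w).length) :
    aFn w (blockStart w t + 1) = nzAt w t :=
  aFn_of_mem_block ht (lt_add_one _) (by have := getD_nzAt_pos ht; omega)

lemma aFn_blockStart_succ (ht : t + 1 < (nzPos w).length) :
    aFn w (blockStart w (t + 1)) = nzAt w t := by
  have hpos := getD_nzAt_pos (w := w) (t := t) (by omega)
  exact aFn_of_mem_block (by omega) (by rw [blockStart_succ ht]; omega) (blockStart_succ ht).le

lemma aFn_sum (hK : 0 < (nzPos w).length) :
    aFn w w.sum = nzAt w ((nzPos w).length - 1) := by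
  have hlast := blockStart_add_getD_last hK
  have hpos := getD_nzAt_pos (w := w) (t := (nzPos w).length - 1) (by omega)
  exact aFn_of_mem_block (by omega) (by omega) hlast.ge

end blocks

lemma complPairs_map_range (a b : ℕ → ℕ) (n : ℕ) :
    complPairs ((List.range n).map fun t => (a t, b t)) =
      (List.range n).map fun t => (b t, a ((t + 1) % n)) := by
  rw [complPairs, List.map_map, List.map_map, Function.comp_def, Function.comp_def,
    List.rotate_one_map_range, List.zip_map']

def muEntry (w : List ℕ) (j : ℕ) : ℕ :=
  if j = 0 then w.length - aFn w w.sum + aFn w 1 else aFn w (j + 1) - aFn w j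

def mu (w : List ℕ) : List ℕ := (List.range w.sum).map (muEntry w)

section mu

variable {w : List ℕ} {t : ℕ}

lemma length_mu (w : List ℕ) : (mu w).length = w.sum := by
  simp [mu]

lemma getD_mu {j : ℕ} (hj : j < w.sum) : (mu w).getD j 0 = muEntry w j := by
  simp [mu, hj]

lemma map_cast_mu (hw : 0 < w.sum) : (mu w).map (Nat.cast : ℕ → ℤ) =
    ((w.length : ℤ) - aFn w w.sum + aFn w 1) ::
      (List.range (w.sum - 1)).map fun j => (aFn w (j + 2) : ℤ) - aFn w (j + 1) := by
  obtain ⟨n, hn⟩ : ∃ n, w.sum = n + 1 := ⟨w.sum - 1, by omega⟩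
  rw [mu, hn, List.range_succ_eq_map, List.map_cons, List.map_cons, List.map_map, List.map_map,
    Nat.add_sub_cancel]
  congr 1
  · rw [muEntry, if_pos rfl, Nat.cast_add, Nat.cast_sub (aFn_le_length w _), hn]
  · refine List.map_congr_left fun j _ => ?_
    rw [Function.comp_apply, Function.comp_apply, muEntry, if_neg j.succ_ne_zero,
      Nat.cast_sub (aFn_mono w (by omega))]

lemma sum_mu (hw : 0 < w.sum) : (mu w).sum = w.length := by
  obtain ⟨n, hn⟩ : ∃ n, w.sum = n + 1 := ⟨w.sum - 1, by omega⟩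
  have htelescope : ((List.range n).map fun j => aFn w (j + 1 + 1) - aFn w (j + 1)).sum =
      aFn w (n + 1) - aFn w 1 :=
    Finset.sum_range_tsub (f := fun j => aFn w (j + 1)) (fun _ _ h => aFn_mono w (by omega)) n
  have hmono := aFn_mono w (by omega : 1 ≤ n + 1)
  have hle := aFn_le_length w (n + 1)
  rw [mu, hn, List.range_succ_eq_map, List.map_cons, List.sum_cons, List.map_map]
  simp only [Function.comp_def, muEntry, Nat.succ_ne_zero, if_false, if_true, hn,
    Nat.succ_eq_add_one, htelescope]
  omega

lemma muEntry_zero (hK : 0 < (nzPos w).length) :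
    muEntry w 0 = nzAt w 0 + w.length - nzAt w ((nzPos w).length - 1) := by
  have := nzAt_lt_length (w := w) (t := (nzPos w).length - 1) (by omega)
  have haFn_one : aFn w 1 = nzAt w 0 := by
    simpa only [blockStart_zero hK] using aFn_blockStart_add_one hK
  rw [muEntry, if_pos rfl, aFn_sum hK, haFn_one]
  omega

lemma muEntry_blockStart_succ (ht : t + 1 < (nzPos w).length) :
    muEntry w (blockStart w (t + 1)) = nzAt w (t + 1) - nzAt w t := by
  have hpos := blockStart_lt_blockStart (w := w) (Nat.zero_lt_succ t) ht
  rw [blockStart_zero (by omega)] at hpos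
  rw [muEntry, if_neg hpos.ne', aFn_blockStart_add_one ht, aFn_blockStart_succ ht]

lemma muEntry_blockStart_succ_mod (ht : t < (nzPos w).length) :
    muEntry w (blockStart w ((t + 1) % (nzPos w).length)) = nzGap w t := by
  rw [nzGap]
  split_ifs with h
  · rw [h, Nat.mod_self, blockStart_zero (by omega), muEntry_zero (by omega),
      show (nzPos w).length - 1 = t by omega]
  · rw [Nat.mod_eq_of_lt (by omega), muEntry_blockStart_succ (by omega)]

/-- Between two consecutive block starts, `a_j` is constant, so `μ` vanishes there. -/
lemma muEntry_eq_zero {j : ℕ} (hj0 : 0 < j) (hjw : j < w.sum)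
    (hj : ∀ t < (nzPos w).length, blockStart w t ≠ j) : muEntry w j = 0 := by
  obtain ⟨t, ht, hlt, hle⟩ := exists_mem_block hj0 hjw.le
  have hj_lt : j < blockStart w t + w.getD (nzAt w t) 0 := by
    refine hle.lt_of_ne fun heq => ?_
    rcases lt_or_ge (t + 1) (nzPos w).length with h | h
    · exact hj (t + 1) h (by rw [blockStart_succ h, heq])
    · have := blockStart_add_getD_last (w := w) (by omega)
      rw [show (nzPos w).length - 1 = t by omega] at this
      omega
  rw [muEntry, if_neg hj0.ne', aFn_of_mem_block ht (by omega) hj_lt,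
    aFn_of_mem_block ht hlt hle, Nat.sub_self]

lemma nzPos_mu (hw : 0 < w.sum) :
    nzPos (mu w) = (List.range (nzPos w).length).map (blockStart w) := by
  have hK := length_nzPos_pos hw.ne'
  refine nzPos_eq_of_mem_iff ?_ fun j => ?_
  · refine List.pairwise_map.2 (List.pairwise_lt_range.imp_of_mem fun _ hb hab => ?_)
    exact blockStart_lt_blockStart hab (List.mem_range.1 hb)
  · simp only [List.mem_map, List.mem_range, length_mu]
    constructor
    · rintro ⟨t, ht, rfl⟩
      refine ⟨blockStart_lt_sum ht, ?_⟩
      rw [getD_mu (blockStart_lt_sum ht)]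
      cases t with
      | zero =>
        have := nzAt_lt_length (w := w) (t := (nzPos w).length - 1) (by omega)
        rw [blockStart_zero hK, muEntry_zero hK]
        omega
      | succ t =>
        have := nzAt_strictMonoOn (w := w) (by simp; omega : t ∈ _) ht (lt_add_one t)
        rw [muEntry_blockStart_succ ht]
        omega
    · rintro ⟨hj, hne⟩
      rw [getD_mu hj] at hne
      by_contra! h
      rcases Nat.eq_zero_or_pos j with rfl | hj0
      · exact h 0 hK (blockStart_zero hK)
      · exact hne (muEntry_eq_zero hj0 hj h)

lemma length_nzPos_mu (hw : 0 < w.sum) : (nzPos (mu w)).length = (nzPos w).length := by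
  rw [nzPos_mu hw, List.length_map, List.length_range]

lemma nzAt_mu (hw : 0 < w.sum) (ht : t < (nzPos w).length) :
    nzAt (mu w) t = blockStart w t := by
  rw [nzAt, List.getD_eq_getElem _ _ (by rwa [length_nzPos_mu hw])]
  simp only [nzPos_mu hw, List.getElem_map, List.getElem_range]

lemma nzGap_mu (hw : 0 < w.sum) (ht : t < (nzPos w).length) :
    nzGap (mu w) t = w.getD (nzAt w t) 0 := by
  have hK := length_nzPos_pos hw.ne'
  rw [nzGap, length_nzPos_mu hw, length_mu, nzAt_mu hw hK, nzAt_mu hw ht, blockStart_zero hK]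
  split_ifs with h
  · have := blockStart_add_getD_last hK
    rw [show (nzPos w).length - 1 = t by omega] at this
    omega
  · rw [nzAt_mu hw (by omega), blockStart_succ (by omega)]
    omega

lemma rotate_pairsOf_mu (hw : 0 < w.sum) :
    (pairsOf (mu w)).rotate 1 = complPairs (pairsOf w) := by
  rw [pairsOf_eq, pairsOf_eq, complPairs_map_range, length_nzPos_mu hw,
    List.rotate_one_map_range]
  refine List.map_congr_left fun t ht => ?_
  have ht := List.mem_range.1 ht
  have hs : (t + 1) % (nzPos w).length < (nzPos w).length := Nat.mod_lt _ (by omega)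
  rw [nzAt_mu hw hs, getD_mu (blockStart_lt_sum hs), nzGap_mu hw hs,
    muEntry_blockStart_succ_mod ht]

end mu

end MuComplement

open MuComplement in
theorem mu_is_complement_general (f m : ℕ) (hm : 1 ≤ m)
    (w : List ℕ) (hlen : w.length = f) (hsum : w.sum = m)
    (μ : List ℤ)
    (hμ : μ = ((f : ℤ) - (aFn w m : ℤ) + (aFn w 1 : ℤ)) ::
      (List.range (m - 1)).map (fun j => (aFn w (j + 2) : ℤ) - (aFn w (j + 1) : ℤ))) :
    (∀ x ∈ μ, 0 ≤ x) ∧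
    (μ.map Int.toNat).length = m ∧
    (μ.map Int.toNat).sum = f ∧
    IsComplementOf w (μ.map Int.toNat) := by
  subst hlen hsum
  rw [← map_cast_mu hm] at hμ
  subst hμ
  have hnat : ((mu w).map (Nat.cast : ℕ → ℤ)).map Int.toNat = mu w := by
    simp [List.map_map, Function.comp_def]
  rw [hnat]
  exact ⟨by simp, length_mu w, sum_mu hm, length_mu w, sum_mu hm, 1, rotate_pairsOf_mu hm⟩

/-- For `w ∈ Row(f,m)`, the vector
`μ = (f - a_m + a_1, a_2 - a_1, a_3 - a_2, …, a_m - a_{m-1})` has nonnegative entries,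
lies in `Row(m,f)`, and its cyclic class is the complement class `⟨w⟩ᶜ`. -/
theorem mu_is_complement (f m : ℕ) (hf : 1 ≤ f) (hm : 1 ≤ m)
    (w : List ℕ) (hlen : w.length = f) (hsum : w.sum = m)
    (μ : List ℤ)
    (hμ : μ = ((f : ℤ) - (aFn w m : ℤ) + (aFn w 1 : ℤ)) ::
      (List.range (m - 1)).map (fun j => (aFn w (j + 2) : ℤ) - (aFn w (j + 1) : ℤ))) :
    (∀ x ∈ μ, 0 ≤ x) ∧
    (μ.map Int.toNat).length = m ∧
    (μ.map Int.toNat).sum = f ∧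
    IsComplementOf w (μ.map Int.toNat) :=
  mu_is_complement_general f m hm w hlen hsum μ hμ
end
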